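/- Under the persistence condition (WF) on the weight α (existence of T > 0 and times t_n with t_n − t_{n−1} ≤ T and ∫_{t_{n−1}}^{t_n} α ≥ ᾱ > 0), every solution of the undelayed weighted Hegselmann-Krause system converges exponentially to consensus: there exists γ > 0, independent of N, such that d(t) ≤ d(0) e^{−γ(t−T)} for all t ≥ 0. -/

import Mathlib

/-!
A single comparison principle drives the proof: if, at each time, every function realizing the
maximum of finitely many differentiable functions satisfies `g' ≤ -a g`, then the maximum is at most
its initial value times `exp (-∫ a)`.

With `g i = ‖x i‖²` and `a = 0` it keeps the agents in the ball of radius `max ‖x i 0‖`, on which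
`ψ ≥ m > 0` by compactness. With `g (i, j) = ‖x i - x j‖²`, at a pair realizing the diameter every
interaction term pulls the two agents together, and the term coupling them gives
`d/dt ‖x i - x j‖² ≤ -4 m α / (N - 1) ‖x i - x j‖²`; hence `d t ≤ d 0 · exp (-2m/(N-1) ∫₀ᵗ α)`.
Finally the persistence condition gives `∫₀ᵗ α ≥ ᾱ (t - T) / T`.
-/

open scoped RealInnerProductSpace
open Filter Set Topology Finset

theorem eventually_slope_sup'_lt {ι : Type*} {s : Finset ι} (hs : s.Nonempty)
    {g : ι → ℝ → ℝ} {g' : ι → ℝ} {x r : ℝ} (hg : ∀ p ∈ s, HasDerivAt (g p) (g' p) x)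
    (hr : ∀ p ∈ s, g p x = s.sup' hs (g · x) → g' p < r) :
    ∀ᶠ z in 𝓝[>] x, slope (fun t => s.sup' hs (g · t)) x z < r := by
  have hbelow : ∀ p ∈ s, ∀ᶠ z in 𝓝[>] x, g p z < s.sup' hs (g · x) + r * (z - x) := by
    intro p hp
    rcases (s.le_sup' (g · x) hp).eq_or_lt with hmax | hlt
    · filter_upwards [(hg p hp).hasDerivWithinAt.limsup_slope_le' (lt_irrefl x) (hr p hp hmax),
        self_mem_nhdsWithin] with z hz (hxz : x < z)
      rw [slope_def_field, div_lt_iff₀ (sub_pos.2 hxz)] at hz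
      linarith
    · have hcont : ContinuousAt (fun z => g p z - r * (z - x)) x :=
        (hg p hp).continuousAt.sub (by fun_prop)
      filter_upwards [nhdsWithin_le_nhds (hcont.eventually_lt continuousAt_const (by simpa))]
        with z hz
      linarith
  filter_upwards [(eventually_all_finset s).2 hbelow, self_mem_nhdsWithin] with z hz (hxz : x < z)
  rw [slope_def_field, div_lt_iff₀ (sub_pos.2 hxz)]
  linarith [(s.sup'_lt_iff hs).2 hz]

theorem sup'_le_of_hasDerivAt_of_barrier {ι : Type*} {s : Finset ι} (hs : s.Nonempty)
    {g g' : ι → ℝ → ℝ} {f' B B' : ℝ → ℝ}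
    (hg : ∀ p ∈ s, ∀ t, 0 ≤ t → HasDerivAt (g p) (g' p t) t)
    (hf' : ∀ t, 0 ≤ t → ∀ p ∈ s, g p t = s.sup' hs (g · t) → g' p t ≤ f' t)
    (hB : ∀ t, HasDerivAt B (B' t) t) (h0 : s.sup' hs (g · 0) ≤ B 0)
    (hcontact : ∀ t, 0 ≤ t → s.sup' hs (g · t) = B t → f' t < B' t)
    {t : ℝ} (ht : 0 ≤ t) : s.sup' hs (g · t) ≤ B t := by
  have hcont : ContinuousOn (fun t => s.sup' hs (g · t)) (Icc 0 t) :=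
    ContinuousOn.finset_sup'_apply hs fun p hp u hu =>
      (hg p hp u hu.1).continuousAt.continuousWithinAt
  refine image_le_of_liminf_slope_right_lt_deriv_boundary hcont (fun u hu r hr => ?_) h0 hB
    (fun u hu => hcontact u hu.1) ⟨ht, le_rfl⟩
  exact (eventually_slope_sup'_lt hs (fun p hp => hg p hp u hu.1)
    fun p hp hmax => (hf' u hu.1 p hp hmax).trans_lt hr).frequently

theorem sup'_le_mul_exp_of_hasDerivAt_le {ι : Type*} {s : Finset ι} (hs : s.Nonempty)
    {g g' : ι → ℝ → ℝ} {a A : ℝ → ℝ} (hA : ∀ t, HasDerivAt A (a t) t)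
    (hg : ∀ p ∈ s, ∀ t, 0 ≤ t → HasDerivAt (g p) (g' p t) t)
    (hmax : ∀ t, 0 ≤ t → ∀ p ∈ s, g p t = s.sup' hs (g · t) → g' p t ≤ -(a t * g p t))
    {t : ℝ} (ht : 0 ≤ t) :
    s.sup' hs (g · t) ≤ s.sup' hs (g · 0) * Real.exp (A 0 - A t) := by
  set G : ℝ → ℝ := fun t => s.sup' hs (g · t)
  -- The barrier `B = (G 0 + ε eᵘ) e^{A 0 - A u}` solves `B' = -a B + ε eᵘ e^{A 0 - A u}`, so it
  -- strictly beats `g' ≤ -a g` at any contact point.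
  have hbarrier : ∀ ε > 0, G t ≤ (G 0 + ε * Real.exp t) * Real.exp (A 0 - A t) := by
    intro ε hε
    have hB : ∀ u, HasDerivAt (fun u => (G 0 + ε * Real.exp u) * Real.exp (A 0 - A u))
        (ε * Real.exp u * Real.exp (A 0 - A u)
          - a u * ((G 0 + ε * Real.exp u) * Real.exp (A 0 - A u))) u := fun u => by
      refine ((((Real.hasDerivAt_exp u).const_mul ε).const_add (G 0)).mul
        (((hA u).const_sub (A 0)).exp)).congr_deriv ?_
      ring
    refine sup'_le_of_hasDerivAt_of_barrier hs hg (f' := fun u => -(a u * G u))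
      (fun u hu p hp hpmax => (hmax u hu p hp hpmax).trans_eq (by rw [hpmax])) hB ?_ ?_ ht
    · simp only [Real.exp_zero, sub_self, mul_one]
      linarith
    intro u _ hcontact
    rw [show G u = _ from hcontact]
    have := mul_pos (mul_pos hε (Real.exp_pos u)) (Real.exp_pos (A 0 - A u))
    linarith
  have hlim : Tendsto (fun ε => (G 0 + ε * Real.exp t) * Real.exp (A 0 - A t)) (𝓝[>] 0)
      (𝓝 (G 0 * Real.exp (A 0 - A t))) := by
    have hc : Continuous fun ε => (G 0 + ε * Real.exp t) * Real.exp (A 0 - A t) := by fun_prop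
    simpa using (hc.tendsto 0).mono_left nhdsWithin_le_nhds
  exact ge_of_tendsto hlim (eventually_nhdsWithin_of_forall hbarrier)

theorem real_inner_sub_sub_nonpos_of_norm_le {E : Type*} [NormedAddCommGroup E]
    [InnerProductSpace ℝ E] {u v z : E} (h : ‖v - z‖ ≤ ‖u - z‖) : ⟪u - z, v - u⟫ ≤ 0 := by
  rw [← sub_sub_sub_cancel_right v u z, inner_sub_right, real_inner_self_eq_norm_sq]
  nlinarith [real_inner_le_norm (u - z) (v - z), norm_nonneg (u - z)]

section HegselmannKrause

variable {E : Type*} [NormedAddCommGroup E] [InnerProductSpace ℝ E]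
  {ι : Type*} [Fintype ι] [DecidableEq ι]

/-- The weight `w` stands for `α t / (N - 1)`. -/
def hkVelocity (ψ : E → E → ℝ) (w : ℝ) (y : ι → E) (i : ι) : E :=
  w • ∑ j ∈ univ.filter (fun j => j ≠ i), ψ (y i) (y j) • (y j - y i)

variable {ψ : E → E → ℝ}

section Farthest

variable {w : ℝ} {y : ι → E} {i : ι} {z : E}

theorem inner_hkVelocity (u : E) : ⟪u, hkVelocity ψ w y i⟫ =
    w * ∑ j ∈ univ.filter (fun j => j ≠ i), ψ (y i) (y j) * ⟪u, y j - y i⟫ := by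
  simp only [hkVelocity, inner_smul_right, inner_sum]

theorem inner_hkVelocity_nonpos_of_farthest (hψ : ∀ a b, 0 ≤ ψ a b) (hw : 0 ≤ w)
    (hfar : ∀ k, ‖y k - z‖ ≤ ‖y i - z‖) : ⟪y i - z, hkVelocity ψ w y i⟫ ≤ 0 := by
  rw [inner_hkVelocity]
  exact mul_nonpos_of_nonneg_of_nonpos hw <| sum_nonpos fun k _ =>
    mul_nonpos_of_nonneg_of_nonpos (hψ _ _) (real_inner_sub_sub_nonpos_of_norm_le (hfar k))

theorem inner_hkVelocity_le_of_farthest (hψ : ∀ a b, 0 ≤ ψ a b) (hw : 0 ≤ w)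
    (hfar : ∀ k, ‖y k - z‖ ≤ ‖y i - z‖) {j : ι} (hji : j ≠ i) :
    ⟪y i - z, hkVelocity ψ w y i⟫ ≤ w * (ψ (y i) (y j) * ⟪y i - z, y j - y i⟫) := by
  rw [inner_hkVelocity, ← add_sum_erase _ _ (mem_filter.2 ⟨mem_univ j, hji⟩)]
  refine mul_le_mul_of_nonneg_left (add_le_of_nonpos_right <| sum_nonpos fun k _ => ?_) hw
  exact mul_nonpos_of_nonneg_of_nonpos (hψ _ _) (real_inner_sub_sub_nonpos_of_norm_le (hfar k))

end Farthest

theorem inner_sub_hkVelocity_le_of_diam {w m : ℝ} {y : ι → E} {i j : ι}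
    (hψ : ∀ a b, 0 ≤ ψ a b) (hw : 0 ≤ w) (hmij : m ≤ ψ (y i) (y j)) (hmji : m ≤ ψ (y j) (y i))
    (hdiam : ∀ k l, ‖y k - y l‖ ≤ ‖y i - y j‖) :
    ⟪y i - y j, hkVelocity ψ w y i - hkVelocity ψ w y j⟫ ≤ -(2 * w * m * ‖y i - y j‖ ^ 2) := by
  rcases eq_or_ne i j with rfl | hij
  · simp
  have hi := inner_hkVelocity_le_of_farthest hψ hw (fun k => hdiam k j) hij.symm
  have hj := inner_hkVelocity_le_of_farthest hψ hw
    (fun k => (hdiam k i).trans_eq (norm_sub_rev _ _)) hij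
  rw [← neg_sub (y i) (y j), inner_neg_right, real_inner_self_eq_norm_sq] at hi
  rw [← neg_sub (y j) (y i), inner_neg_right, real_inner_self_eq_norm_sq, norm_sub_rev] at hj
  have hsplit : ⟪y i - y j, hkVelocity ψ w y i - hkVelocity ψ w y j⟫ =
      ⟪y i - y j, hkVelocity ψ w y i⟫ + ⟪y j - y i, hkVelocity ψ w y j⟫ := by
    rw [← neg_sub (y i) (y j), inner_neg_left, inner_sub_right, sub_eq_add_neg]
  rw [hsplit]
  have hwd : 0 ≤ w * ‖y i - y j‖ ^ 2 := by positivity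
  nlinarith

section Trajectory

variable {x : ι → ℝ → E} {w : ℝ → ℝ}

theorem norm_le_of_hasDerivAt_hkVelocity (hψ : ∀ a b, 0 ≤ ψ a b) (hw : ∀ t, 0 ≤ w t)
    (hx : ∀ i t, 0 ≤ t → HasDerivAt (x i) (hkVelocity ψ (w t) (fun j => x j t) i) t)
    {R : ℝ} (hR : ∀ i, ‖x i 0‖ ≤ R) ⦃t : ℝ⦄ (ht : 0 ≤ t) (i : ι) : ‖x i t‖ ≤ R := by
  have hne : (univ : Finset ι).Nonempty := ⟨i, mem_univ i⟩
  have hG := sup'_le_mul_exp_of_hasDerivAt_le hne (g := fun i t => ‖x i t‖ ^ 2)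
    (a := 0) (A := 0) (fun _ => hasDerivAt_const _ _) (fun i _ t ht => (hx i t ht).norm_sq)
    (fun t _ p _ hp => ?_) ht
  · have hsq : ‖x i t‖ ^ 2 ≤ R ^ 2 := by
      refine (le_sup' (fun i => ‖x i t‖ ^ 2) (mem_univ i)).trans (hG.trans ?_)
      simpa using fun j => pow_le_pow_left₀ (norm_nonneg _) (hR j) 2
    exact (sq_le_sq₀ (norm_nonneg _) ((norm_nonneg _).trans (hR i))).1 hsq
  · have hfar : ∀ k, ‖x k t - 0‖ ≤ ‖x p t - 0‖ := fun k => by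
      rw [sub_zero, sub_zero, ← sq_le_sq₀ (norm_nonneg _) (norm_nonneg _)]
      exact hp ▸ le_sup' (fun i => ‖x i t‖ ^ 2) (mem_univ k)
    have := inner_hkVelocity_nonpos_of_farthest hψ (hw t) hfar
    simp only [sub_zero] at this
    simp only [Pi.zero_apply, zero_mul, neg_zero]
    linarith

theorem norm_sub_le_mul_exp_of_hasDerivAt_hkVelocity (hψ : ∀ a b, 0 ≤ ψ a b)
    (hw : ∀ t, 0 ≤ w t)
    (hx : ∀ i t, 0 ≤ t → HasDerivAt (x i) (hkVelocity ψ (w t) (fun j => x j t) i) t)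
    {W : ℝ → ℝ} (hW : ∀ t, HasDerivAt W (w t) t)
    {m : ℝ} (hm : ∀ t, 0 ≤ t → ∀ i j, m ≤ ψ (x i t) (x j t))
    {D : ℝ} (hD : ∀ i j, ‖x i 0 - x j 0‖ ≤ D) ⦃t : ℝ⦄ (ht : 0 ≤ t) (i j : ι) :
    ‖x i t - x j t‖ ≤ D * Real.exp (-(2 * m * (W t - W 0))) := by
  have hne : (univ : Finset (ι × ι)).Nonempty := ⟨(i, j), mem_univ _⟩
  have hG := sup'_le_mul_exp_of_hasDerivAt_le hne
    (g := fun p t => ‖x p.1 t - x p.2 t‖ ^ 2) (A := fun t => 4 * m * W t)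
    (fun t => (hW t).const_mul (4 * m))
    (fun p _ t ht => ((hx p.1 t ht).sub (hx p.2 t ht)).norm_sq) (fun t ht p _ hp => ?_) ht
  · have hD0 : 0 ≤ D := (norm_nonneg _).trans (hD i i)
    have hsq : ‖x i t - x j t‖ ^ 2 ≤ (D * Real.exp (-(2 * m * (W t - W 0)))) ^ 2 := by
      refine (le_sup' (fun p : ι × ι => ‖x p.1 t - x p.2 t‖ ^ 2) (mem_univ (i, j))).trans
        (hG.trans ?_)
      calc _ ≤ D ^ 2 * Real.exp (4 * m * W 0 - 4 * m * W t) := by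
            gcongr
            exact sup'_le _ _ fun p _ => pow_le_pow_left₀ (norm_nonneg _) (hD p.1 p.2) 2
        _ = _ := by
            rw [mul_pow, ← Real.exp_nat_mul]
            congr 2
            push_cast
            ring
    exact (sq_le_sq₀ (norm_nonneg _) (by positivity)).1 hsq
  · have hdiam : ∀ k l, ‖x k t - x l t‖ ≤ ‖x p.1 t - x p.2 t‖ := fun k l => by
      rw [← sq_le_sq₀ (norm_nonneg _) (norm_nonneg _)]
      exact hp ▸ le_sup' (fun p : ι × ι => ‖x p.1 t - x p.2 t‖ ^ 2) (mem_univ (k, l))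
    have := inner_sub_hkVelocity_le_of_diam hψ (hw t) (hm t ht p.1 p.2) (hm t ht p.2 p.1) hdiam
    rw [Pi.sub_apply]
    linarith

end Trajectory

end HegselmannKrause

section Persistence

variable {α : ℝ → ℝ} {τ : ℕ → ℝ} {abar : ℝ}

theorem natCast_mul_le_integral_of_persistent
    (hαi : ∀ a b, IntervalIntegrable α MeasureTheory.volume a b) (hτ0 : τ 0 = 0)
    (hint : ∀ n : ℕ, abar ≤ ∫ t in τ n..τ (n + 1), α t) (n : ℕ) :
    n * abar ≤ ∫ t in (0)..τ n, α t := by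
  induction n with
  | zero => simp [hτ0]
  | succ n ih =>
    rw [← intervalIntegral.integral_add_adjacent_intervals (hαi 0 (τ n)) (hαi _ _)]
    push_cast
    linarith [hint n]

theorem mul_sub_le_integral_of_persistent
    (hαi : ∀ a b, IntervalIntegrable α MeasureTheory.volume a b) (hα : ∀ t, 0 ≤ α t)
    {T : ℝ} (hT : 0 < T) (habar : 0 ≤ abar) (hτ0 : τ 0 = 0) (hgap : ∀ n : ℕ, τ (n + 1) - τ n ≤ T)
    (hint : ∀ n : ℕ, abar ≤ ∫ t in τ n..τ (n + 1), α t) {t : ℝ} (ht : 0 ≤ t) :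
    abar / T * (t - T) ≤ ∫ s in (0)..t, α s := by
  have hτT : ∀ n : ℕ, τ n ≤ n * T := fun n => by
    induction n with
    | zero => simp [hτ0]
    | succ n ih => push_cast; linarith [hgap n]
  set n := ⌊t / T⌋₊
  have hnt : τ n ≤ t := (hτT n).trans ((le_div_iff₀ hT).1 (Nat.floor_le (by positivity)))
  have hn : t / T - 1 ≤ n := by linarith [Nat.lt_floor_add_one (t / T)]
  calc abar / T * (t - T) = abar * (t / T - 1) := by field_simp
    _ ≤ abar * n := mul_le_mul_of_nonneg_left hn habar
    _ ≤ (∫ s in (0)..τ n, α s) + ∫ s in τ n..t, α s := by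
        have hrest : 0 ≤ ∫ s in τ n..t, α s := intervalIntegral.integral_nonneg hnt fun s _ => hα s
        linarith [natCast_mul_le_integral_of_persistent hαi hτ0 hint n]
    _ = ∫ s in (0)..t, α s := intervalIntegral.integral_add_adjacent_intervals (hαi _ _) (hαi _ _)

end Persistence

theorem hk_exponential_consensus_general
    {dim N : ℕ} (hN : 2 ≤ N)
    (ψ : EuclideanSpace ℝ (Fin dim) → EuclideanSpace ℝ (Fin dim) → ℝ)
    (hψpos : ∀ y z, 0 < ψ y z)
    (hψcont : Continuous fun p : EuclideanSpace ℝ (Fin dim) × EuclideanSpace ℝ (Fin dim) => ψ p.1 p.2)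
    (α : ℝ → ℝ) (hαcont : Continuous α) (hα01 : ∀ t, α t ∈ Set.Icc (0:ℝ) 1)
    (x : Fin N → ℝ → EuclideanSpace ℝ (Fin dim))
    (hode : ∀ i t, 0 ≤ t → HasDerivAt (x i)
      ((α t / ((N : ℝ) - 1)) •
        ∑ j ∈ Finset.univ.filter (fun j => j ≠ i),
          ψ (x i t) (x j t) • (x j t - x i t)) t)
    (T abar : ℝ) (hT : 0 < T) (habar : 0 < abar)
    (tseq : ℕ → ℝ) (ht0 : tseq 0 = 0)
    (hgap : ∀ n : ℕ, tseq (n + 1) - tseq n ≤ T)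
    (hint : ∀ n : ℕ, abar ≤ ∫ t in (tseq n)..(tseq (n + 1)), α t)
    (diam : ℝ → ℝ) (hdiam : ∀ t, diam t = ⨆ i, ⨆ j, ‖x i t - x j t‖) :
    ∃ γ : ℝ, 0 < γ ∧ ∀ t : ℝ, 0 ≤ t → diam t ≤ diam 0 * Real.exp (-γ * (t - T)) := by
  have hN1 : (0 : ℝ) < N - 1 := by
    have : (2 : ℝ) ≤ N := mod_cast hN
    linarith
  have hψ : ∀ a b, 0 ≤ ψ a b := fun a b => (hψpos a b).le
  have hw : ∀ t, 0 ≤ α t / ((N : ℝ) - 1) := fun t => div_nonneg (hα01 t).1 hN1.le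
  have hD : ∀ i j, ‖x i 0 - x j 0‖ ≤ diam 0 := fun i j => by
    rw [hdiam]
    exact (le_ciSup (f := fun j => ‖x i 0 - x j 0‖) (finite_range _).bddAbove j).trans
      (le_ciSup (f := fun i => ⨆ j, ‖x i 0 - x j 0‖) (finite_range _).bddAbove i)
  obtain ⟨R, hR⟩ := (finite_range fun i => ‖x i 0‖).bddAbove
  have hball := norm_le_of_hasDerivAt_hkVelocity (w := fun t => α t / ((N : ℝ) - 1)) hψ hw hode
    (R := R) fun i => hR ⟨i, rfl⟩
  obtain ⟨m, hm, hmψ⟩ := ((isCompact_closedBall 0 R).prod (isCompact_closedBall 0 R)).exists_forall_le'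
    hψcont.continuousOn fun p _ => hψpos p.1 p.2
  have hW : ∀ t, HasDerivAt (fun t => (∫ s in (0)..t, α s) / (N - 1)) (α t / (N - 1)) t :=
    fun t => ((hαcont.integral_hasStrictDerivAt 0 t).hasDerivAt).div_const _
  have hdecay := norm_sub_le_mul_exp_of_hasDerivAt_hkVelocity hψ hw hode hW (m := m)
    (fun t ht i j => hmψ (x i t, x j t) (Set.mk_mem_prod (mem_closedBall_zero_iff.2 (hball ht i))
      (mem_closedBall_zero_iff.2 (hball ht j)))) hD
  refine ⟨2 * m * abar / ((N - 1) * T), by positivity, fun t ht => ?_⟩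
  have hA := mul_sub_le_integral_of_persistent (fun a b => hαcont.intervalIntegrable a b)
    (fun t => (hα01 t).1) hT habar.le ht0 hgap hint ht
  have hne : Nonempty (Fin N) := ⟨⟨0, by omega⟩⟩
  have hdiam0 : 0 ≤ diam 0 := (norm_nonneg _).trans (hD hne.some hne.some)
  rw [hdiam t]
  refine ciSup_le fun i => ciSup_le fun j => (hdecay ht i j).trans <|
    mul_le_mul_of_nonneg_left (Real.exp_le_exp.2 ?_) hdiam0
  simp only [intervalIntegral.integral_same, zero_div, sub_zero]
  have := mul_le_mul_of_nonneg_left hA (by positivity : 0 ≤ 2 * m / (N - 1))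
  field_simp at this ⊢
  linarith

/-- exponential convergence to consensus for the undelayed weighted
Hegselmann-Krause system under the persistence condition (WF). -/
theorem hk_exponential_consensus
    {dim N : ℕ} (hN : 2 ≤ N)
    (ψ : EuclideanSpace ℝ (Fin dim) → EuclideanSpace ℝ (Fin dim) → ℝ)
    (hψpos : ∀ y z, 0 < ψ y z)
    (hψbdd : ∃ K, ∀ y z, ψ y z ≤ K)
    (hψcont : Continuous fun p : EuclideanSpace ℝ (Fin dim) × EuclideanSpace ℝ (Fin dim) => ψ p.1 p.2)
    (α : ℝ → ℝ) (hαcont : Continuous α) (hα01 : ∀ t, α t ∈ Set.Icc (0:ℝ) 1)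
    (x : Fin N → ℝ → EuclideanSpace ℝ (Fin dim))
    (hode : ∀ i t, 0 ≤ t → HasDerivAt (x i)
      ((α t / ((N : ℝ) - 1)) •
        ∑ j ∈ Finset.univ.filter (fun j => j ≠ i),
          ψ (x i t) (x j t) • (x j t - x i t)) t)
    (T abar : ℝ) (hT : 0 < T) (habar : 0 < abar)
    (tseq : ℕ → ℝ) (ht0 : tseq 0 = 0) (htmono : StrictMono tseq)
    (hgap : ∀ n : ℕ, tseq (n + 1) - tseq n ≤ T)
    (hint : ∀ n : ℕ, abar ≤ ∫ t in (tseq n)..(tseq (n + 1)), α t)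
    (diam : ℝ → ℝ) (hdiam : ∀ t, diam t = ⨆ i, ⨆ j, ‖x i t - x j t‖) :
    ∃ γ : ℝ, 0 < γ ∧ ∀ t : ℝ, 0 ≤ t → diam t ≤ diam 0 * Real.exp (-γ * (t - T)) :=
  hk_exponential_consensus_general hN ψ hψpos hψcont α hαcont hα01 x hode T abar hT habar tseq ht0
    hgap hint diam hdiam
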